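/- The separated polynomial f_λ(y) = Σ_{k=λ₁}^{λ₂} (t^{−2}q)^{k−λ₁} [(t,q^{−λ₂₁};q)_{k−λ₁}/((q,t^{−1}q^{1−λ₂₁};q)_{k−λ₁})] y^k satisfies the second-order q-difference equation t(1−qy) f_λ(q²y) − t^{1/2}(t−qy) h₁ f_λ(qy) + (t²−qy) h₂ f_λ(y) = 0, where h₁ = t^{−1/2}q^{λ₁} + t^{1/2}q^{λ₂} and h₂ = q^{λ₁+λ₂}. -/

import Mathlib

open Finset

/-- The q-Pochhammer symbol `(a;q)_n`. -/
noncomputable def qPoch (a q : ℂ) (n : ℕ) : ℂ := ∏ j ∈ Finset.range n, (1 - a * q ^ j)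

/-- Coefficient χ_k of the separated polynomial f_λ. -/
noncomputable def chi (q t : ℂ) (l1 l2 k : ℤ) : ℂ :=
  (t⁻¹ ^ 2 * q) ^ (k - l1).toNat *
    (qPoch t q (k - l1).toNat * qPoch (q ^ (-(l2 - l1))) q (k - l1).toNat) /
    (qPoch q q (k - l1).toNat * qPoch (t⁻¹ * q ^ (1 - (l2 - l1))) q (k - l1).toNat)

/-- The separated polynomial f_λ(y) = Σ_{k=λ₁}^{λ₂} χ_k y^k. -/
noncomputable def fsep (q t : ℂ) (l1 l2 : ℤ) (y : ℂ) : ℂ :=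
  ∑ k ∈ Finset.Icc l1 l2, chi q t l1 l2 k * y ^ k

/-!
Write `f_λ(y) = y^{λ₁} P(y)` with `P(y) = ∑_{n ≤ λ₂₁} c_n y^n`. After dividing by `q^{2λ₁} y^{λ₁}`
the coefficient of `y^n` in the equation is `A_n c_n - B_{n-1} c_{n-1}`, where
`A_n = t(qⁿ - 1)(qⁿ - t q^{λ₂₁})` and `B_n = q(t qⁿ - 1)(qⁿ - q^{λ₂₁})`. The ratio `c_{n+1}/c_n` of
the terms of a terminating `₂φ₁` gives exactly `A_{n+1} c_{n+1} = B_n c_n`, and `A_0 = B_{λ₂₁} = 0`,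
so the sum telescopes to zero.
-/

lemma qPoch_succ (a q : ℂ) (n : ℕ) : qPoch a q (n + 1) = qPoch a q n * (1 - a * q ^ n) :=
  prod_range_succ _ _

/-- The `n`-th term of the basic hypergeometric series `₂φ₁(a, b; d; q, z)`. -/
noncomputable def qHypergeomTerm (a b d q z : ℂ) (n : ℕ) : ℂ :=
  z ^ n * (qPoch a q n * qPoch b q n) / (qPoch q q n * qPoch d q n)

lemma qHypergeomTerm_succ_mul (a b d q z : ℂ) (n : ℕ) (hq : qPoch q q (n + 1) ≠ 0)
    (hd : qPoch d q (n + 1) ≠ 0) :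
    qHypergeomTerm a b d q z (n + 1) * ((1 - q ^ (n + 1)) * (1 - d * q ^ n))
      = qHypergeomTerm a b d q z n * (z * (1 - a * q ^ n) * (1 - b * q ^ n)) := by
  rw [qPoch_succ] at hq hd
  simp only [qHypergeomTerm, qPoch_succ, pow_succ']
  rw [div_mul_eq_mul_div, div_eq_iff (mul_ne_zero hq hd)]
  field_simp [left_ne_zero_of_mul hq, left_ne_zero_of_mul hd]

lemma chi_eq_qHypergeomTerm (q t : ℂ) (l1 l2 : ℤ) (n : ℕ) :
    chi q t l1 l2 (l1 + n)
      = qHypergeomTerm t (q ^ (-(l2 - l1))) (t⁻¹ * q ^ (1 - (l2 - l1))) q (t⁻¹ ^ 2 * q) n := by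
  simp [chi, qHypergeomTerm]

lemma chi_recurrence {q t : ℂ} (hq : q ≠ 0) (ht : t ≠ 0) {l1 l2 : ℤ} {N : ℕ}
    (hN : l2 - l1 = N) {n : ℕ}
    (hden : qPoch q q (n + 1) ≠ 0 ∧ qPoch (t⁻¹ * q ^ (1 - (l2 - l1))) q (n + 1) ≠ 0) :
    t * (q ^ (n + 1) - 1) * (q ^ (n + 1) - t * q ^ N) * chi q t l1 l2 (l1 + (n + 1 : ℕ))
      = q * (t * q ^ n - 1) * (q ^ n - q ^ N) * chi q t l1 l2 (l1 + n) := by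
  have h := qHypergeomTerm_succ_mul t (q ^ (-(l2 - l1))) _ q (t⁻¹ ^ 2 * q) n hden.1 hden.2
  rw [← chi_eq_qHypergeomTerm, ← chi_eq_qHypergeomTerm, hN, zpow_neg, zpow_sub₀ hq,
    zpow_one, zpow_natCast] at h
  have hqN : q ^ N ≠ 0 := pow_ne_zero _ hq
  field_simp at h
  linear_combination h

lemma sum_range_sub_eq_zero_of_shift {M : Type*} [AddCommGroup M] (a b : ℕ → M) (N : ℕ)
    (h0 : a 0 = 0) (hN : b N = 0) (hab : ∀ n < N, a (n + 1) = b n) :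
    ∑ n ∈ range (N + 1), (a n - b n) = 0 := by
  rw [sum_sub_distrib, sum_range_succ' a, sum_range_succ b, h0, hN,
    sum_congr rfl fun n hn => hab n (mem_range.mp hn)]
  simp

/-- The equation for `f_λ`, divided by `q^{2λ₁} y^{λ₁}`, written coefficientwise for
`P(y) = ∑_{n ≤ N} c_n y^n`; here `Q` stands for `q^{λ₂₁}`. -/
lemma qDifference_sum_eq {R : Type*} [CommRing R] (c : ℕ → R) (q t Q y : R) (N : ℕ) :
    t * (1 - q * y) * ∑ n ∈ range (N + 1), c n * (q ^ 2 * y) ^ n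
      - (t - q * y) * (1 + t * Q) * ∑ n ∈ range (N + 1), c n * (q * y) ^ n
      + (t ^ 2 - q * y) * Q * ∑ n ∈ range (N + 1), c n * y ^ n
    = ∑ n ∈ range (N + 1), (t * (q ^ n - 1) * (q ^ n - t * Q) * c n * y ^ n
        - q * (t * q ^ n - 1) * (q ^ n - Q) * c n * y ^ (n + 1)) := by
  simp only [mul_sum, ← sum_sub_distrib, ← sum_add_distrib]
  refine sum_congr rfl fun n _ => ?_
  ring

lemma fsep_eq_zpow_mul_sum (q t : ℂ) {l1 l2 : ℤ} {N : ℕ} (hN : l2 - l1 = N) {y : ℂ}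
    (hy : y ≠ 0) :
    fsep q t l1 l2 y = y ^ l1 * ∑ n ∈ range (N + 1), chi q t l1 l2 (l1 + n) * y ^ n := by
  rw [fsep, mul_sum, eq_comm]
  refine sum_nbij' (fun n => l1 + n) (fun k => (k - l1).toNat) ?_ ?_ ?_ ?_
    fun n _ => by rw [zpow_add₀ hy, zpow_natCast]; ring
  all_goals intro _ h; simp only [mem_range, mem_Icc] at h ⊢; omega

/-- The separated polynomial f_λ satisfies the q-difference equation
t(1−qy) f_λ(q²y) − t^{1/2}(t−qy) h₁ f_λ(qy) + (t²−qy) h₂ f_λ(y) = 0, where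
h₁ = t^{−1/2}q^{λ₁} + t^{1/2}q^{λ₂}, h₂ = q^{λ₁+λ₂}, and s = t^{1/2}. -/
theorem separated_q_difference_equation (q t s : ℂ) (hq : q ≠ 0) (ht : t ≠ 0)
    (hs : s ^ 2 = t) (l1 l2 : ℤ) (hl : l1 ≤ l2)
    (hden : ∀ k : ℕ, qPoch q q k ≠ 0 ∧ qPoch (t⁻¹ * q ^ (1 - (l2 - l1))) q k ≠ 0)
    (y : ℂ) (hy : y ≠ 0) :
    t * (1 - q * y) * fsep q t l1 l2 (q ^ 2 * y)
      - s * (t - q * y) * (s⁻¹ * q ^ l1 + s * q ^ l2) * fsep q t l1 l2 (q * y)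
      + (t ^ 2 - q * y) * q ^ (l1 + l2) * fsep q t l1 l2 y = 0 := by
  obtain ⟨N, hN⟩ : ∃ N : ℕ, l2 - l1 = N := ⟨(l2 - l1).toNat, by omega⟩
  have hs0 : s ≠ 0 := by
    rintro rfl
    exact ht (by simp [← hs])
  have hl2 : q ^ l2 = q ^ l1 * q ^ N := by
    rw [← zpow_natCast, ← zpow_add₀ hq, ← hN, add_sub_cancel]
  have hq2y : (q ^ 2 * y) ^ l1 = q ^ l1 * q ^ l1 * y ^ l1 := by
    rw [show q ^ 2 * y = q * (q * y) by ring, mul_zpow, mul_zpow, mul_assoc]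
  have reduced := qDifference_sum_eq (fun n => chi q t l1 l2 (l1 + n)) q t (q ^ N) y N
  rw [sum_range_sub_eq_zero_of_shift _ _ N (by simp) (by simp) fun n _ => by
    linear_combination y ^ (n + 1) * chi_recurrence hq ht hN (hden (n + 1))] at reduced
  rw [fsep_eq_zpow_mul_sum q t hN hy, fsep_eq_zpow_mul_sum q t hN (mul_ne_zero hq hy),
    fsep_eq_zpow_mul_sum q t hN (mul_ne_zero (pow_ne_zero 2 hq) hy), hq2y, mul_zpow,
    zpow_add₀ hq, hl2]
  set S := ∑ n ∈ range (N + 1), chi q t l1 l2 (l1 + n) * (q * y) ^ n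
  linear_combination q ^ l1 * q ^ l1 * y ^ l1 * reduced
    - (t - q * y) * q ^ l1 * q ^ l1 * y ^ l1 * S * mul_inv_cancel₀ hs0
    - (t - q * y) * q ^ l1 * q ^ l1 * q ^ N * y ^ l1 * S * hs
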